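/- arXiv:2510.24091 — 2 statements merged into one kernel-verified Lean document; each statement's English description precedes it below -/
import Mathlib

section
/- For any fixed $p, p' \in \mathcal{P}$ with $p' \neq -p$, the number of admissible mirrors $\pi$ on $\mathcal{P}$ with $\pi(p) = p'$ equals $(2d-3)!!$ (with the convention $(-1)!! = 1$), i.e. equals $(2d-1)!!/(2d-1)$. Consequently, under the uniform probability measure on the set of admissible mirrors, the probability of the event $\{\pi(p) = p'\}$ equals $1/(2d-1)$ for every $p'\neq -p$, and equals $0$ for $p' = -p$. -/
/-- The velocity set `𝒫 = {±e₁, …, ±e_d} ⊆ ℤ^d`. -/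
def velocitySet (d : ℕ) : Finset (Fin d → ℤ) :=
  (Finset.univ.image fun i : Fin d => Pi.single i (1 : ℤ)) ∪
    (Finset.univ.image fun i : Fin d => -Pi.single i (1 : ℤ))

/-- An admissible mirror: a bijection `π` of `𝒫` satisfying the reversibility
condition `π(-π(p)) = -p` (phrased via the element `q ∈ 𝒫` with `q = -π(p)`)
and the no-U-turn condition `π(p) ≠ -p`. -/
def IsAdmissibleMirror {d : ℕ}
    (π : {v // v ∈ velocitySet d} ≃ {v // v ∈ velocitySet d}) : Prop :=
  (∀ p q : {v // v ∈ velocitySet d},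
      (q : Fin d → ℤ) = -(π p : Fin d → ℤ) → (π q : Fin d → ℤ) = -(p : Fin d → ℤ)) ∧
    ∀ p : {v // v ∈ velocitySet d}, (π p : Fin d → ℤ) ≠ -(p : Fin d → ℤ)

/-!
Writing `σ` for negation on `𝒫`, the map `π ↦ σ ∘ π` identifies admissible mirrors with the
fixed-point-free involutions of `𝒫`, i.e. with the perfect matchings of a `2d`-element set, and
`π(p) = p'` becomes `(σ ∘ π)(p) = -p'`. Matching a fixed element first shows that there are
`(2d - 1)‼` matchings, and that those containing a prescribed pair `{p, -p'}` with `p ≠ -p'`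
are the matchings of the remaining `2d - 2` elements, of which there are `(2d - 3)‼`.
-/

open Function Nat

theorem Fintype.card_subtype_ne_and_ne {α : Type*} [Fintype α] [DecidableEq α] {a b : α}
    (hab : a ≠ b) : Fintype.card {x : α // x ≠ a ∧ x ≠ b} = Fintype.card α - 2 := by
  rw [Fintype.card_subtype, ← Finset.card_pair hab, ← Finset.card_univ,
    ← Finset.card_sdiff_of_subset (Finset.subset_univ _)]
  congr 1
  ext x
  simp

@[ext]
structure FixedPointFreeInvolution (α : Type*) where
  toFun : α → α
  involutive : Involutive toFun
  apply_ne : ∀ x, toFun x ≠ x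

namespace FixedPointFreeInvolution

variable {α : Type*}

instance : CoeFun (FixedPointFreeInvolution α) fun _ => α → α := ⟨toFun⟩

instance [Finite α] : Finite (FixedPointFreeInvolution α) :=
  Finite.of_injective toFun fun _ _ => FixedPointFreeInvolution.ext

def compEquiv {σ : α → α} (hσ : Involutive σ) :
    {π : α ≃ α // (∀ p, π (σ (π p)) = σ p) ∧ ∀ p, π p ≠ σ p} ≃ FixedPointFreeInvolution α where
  toFun π :=
    { toFun := σ ∘ π.1
      involutive p := by simp [π.2.1 p, hσ p]
      apply_ne p h := π.2.2 p (hσ.eq_iff.mp h) }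
  invFun f :=
    ⟨f.involutive.toPerm.trans hσ.toPerm, fun p => by simp [hσ _, f.involutive _],
      fun p h => f.apply_ne p (hσ.injective h)⟩
  left_inv π := by ext; simp [hσ _]
  right_inv f := by ext; simp [hσ _]

def compApplyEqEquiv {σ : α → α} (hσ : Involutive σ) (p p' : α) :
    {π : α ≃ α // ((∀ p, π (σ (π p)) = σ p) ∧ ∀ p, π p ≠ σ p) ∧ π p = p'} ≃
      {f : FixedPointFreeInvolution α // f p = σ p'} :=
  (Equiv.subtypeSubtypeEquivSubtypeInter _ _).symm.trans
    ((compEquiv hσ).subtypeEquiv fun _ => hσ.injective.eq_iff.symm)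

variable [DecidableEq α] {a b : α}

def applyEqEquiv (hab : a ≠ b) :
    {f : FixedPointFreeInvolution α // f a = b} ≃
      FixedPointFreeInvolution {x : α // x ≠ a ∧ x ≠ b} where
  toFun f :=
    { toFun x := ⟨f.1 x, fun h => x.2.2 (by rw [← f.1.involutive x, h, f.2]),
        fun h => x.2.1 (by rw [← f.1.involutive x, h, (f.1.involutive.eq_iff.mp f.2).symm])⟩
      involutive x := Subtype.ext (f.1.involutive x)
      apply_ne x h := f.1.apply_ne x (congrArg Subtype.val h) }
  invFun g :=
    ⟨{ toFun x := if hxa : x = a then b else if hxb : x = b then a else g ⟨x, hxa, hxb⟩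
       involutive x := by
        by_cases hxa : x = a
        · simp [hxa, hab.symm]
        by_cases hxb : x = b
        · simp [hxb]
        simp [hxa, hxb, (g ⟨x, hxa, hxb⟩).2.1, (g ⟨x, hxa, hxb⟩).2.2, g.involutive ⟨x, hxa, hxb⟩]
       apply_ne x := by
        split_ifs with hxa hxb
        · exact hxa ▸ hab.symm
        · exact hxb ▸ hab
        · exact fun h => g.apply_ne _ (Subtype.ext h) }, by simp⟩
  left_inv f := by
    ext x
    dsimp only
    split_ifs with hxa hxb
    · exact hxa ▸ f.2.symm
    · rw [hxb]; exact f.1.involutive.eq_iff.mp f.2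
    · rfl
  right_inv g := by
    ext x
    simp [x.2.1, x.2.2]

variable [Fintype α]

theorem card_eq_doubleFactorial {m : ℕ} (h : Fintype.card α = 2 * m) :
    Nat.card (FixedPointFreeInvolution α) = (2 * m - 1)‼ := by
  induction m generalizing α with
  | zero =>
    have : IsEmpty α := Fintype.card_eq_zero_iff.mp h
    have : Unique (FixedPointFreeInvolution α) :=
      { default := ⟨isEmptyElim, isEmptyElim, isEmptyElim⟩
        uniq _ := FixedPointFreeInvolution.ext (funext isEmptyElim) }
    exact Nat.card_unique
  | succ m ih =>
    obtain ⟨a⟩ : Nonempty α := Fintype.card_pos_iff.mp (by omega)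
    have : IsEmpty {f : FixedPointFreeInvolution α // f a = a} := ⟨fun f => f.1.apply_ne a f.2⟩
    have hpinned (b : α) (hb : b ∈ Finset.univ.erase a) :
        Nat.card {f : FixedPointFreeInvolution α // f a = b} = (2 * m - 1)‼ := by
      have hab : a ≠ b := (Finset.ne_of_mem_erase hb).symm
      rw [Nat.card_congr (applyEqEquiv hab)]
      exact ih (by rw [Fintype.card_subtype_ne_and_ne hab]; omega)
    calc Nat.card (FixedPointFreeInvolution α)
        = ∑ b, Nat.card {f : FixedPointFreeInvolution α // f a = b} := by
          rw [← Nat.card_sigma, Nat.card_congr (Equiv.sigmaFiberEquiv _)]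
      _ = (2 * (m + 1) - 1) * (2 * m - 1)‼ := by
          rw [← Finset.sum_erase_add _ _ (Finset.mem_univ a), Nat.card_of_isEmpty, add_zero,
            Finset.sum_congr rfl hpinned, Finset.sum_const, Finset.card_erase_of_mem
            (Finset.mem_univ a), Finset.card_univ, h, smul_eq_mul]
      _ = (2 * (m + 1) - 1)‼ := by
          rw [show 2 * (m + 1) - 1 = 2 * m + 1 by omega, doubleFactorial_add_one]

theorem card_apply_eq {m : ℕ} (h : Fintype.card α = 2 * m) (hab : a ≠ b) :
    Nat.card {f : FixedPointFreeInvolution α // f a = b} = (2 * m - 3)‼ := by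
  rw [Nat.card_congr (applyEqEquiv hab),
    card_eq_doubleFactorial (m := m - 1) (by rw [Fintype.card_subtype_ne_and_ne hab]; omega)]
  congr 1; omega

end FixedPointFreeInvolution

theorem card_velocitySet (d : ℕ) : (velocitySet d).card = 2 * d := by
  have hsingle : Injective fun i : Fin d => Pi.single i (1 : ℤ) := fun i j h => by
    simpa [Pi.single_apply] using congrFun h i
  have hdisj : Disjoint (Finset.univ.image fun i : Fin d => Pi.single i (1 : ℤ))
      (Finset.univ.image fun i : Fin d => -Pi.single i (1 : ℤ)) := by
    simp only [Finset.disjoint_left, Finset.mem_image, Finset.mem_univ, true_and]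
    rintro _ ⟨i, rfl⟩ ⟨j, h⟩
    have := congrFun h i
    simp only [Pi.neg_apply, Pi.single_apply] at this
    split_ifs at this
    omega
  rw [velocitySet, Finset.card_union_of_disjoint hdisj, Finset.card_image_of_injective _ hsingle,
    Finset.card_image_of_injective _
      (show Injective fun i : Fin d => -Pi.single i (1 : ℤ) from neg_injective.comp hsingle),
    Finset.card_univ, Fintype.card_fin, two_mul]

theorem neg_mem_velocitySet {d : ℕ} {v : Fin d → ℤ} (h : v ∈ velocitySet d) :
    -v ∈ velocitySet d := by
  simp only [velocitySet, Finset.mem_union, Finset.mem_image, Finset.mem_univ, true_and] at h ⊢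
  rcases h with ⟨i, rfl⟩ | ⟨i, rfl⟩
  · exact Or.inr ⟨i, rfl⟩
  · exact Or.inl ⟨i, (neg_neg _).symm⟩

section Mirror

variable {d : ℕ}

def negVelocity (v : {v // v ∈ velocitySet d}) : {v // v ∈ velocitySet d} :=
  ⟨-v, neg_mem_velocitySet v.2⟩

theorem negVelocity_involutive : Involutive (negVelocity (d := d)) :=
  fun v => Subtype.ext (neg_neg v.1)

theorem isAdmissibleMirror_iff {π : {v // v ∈ velocitySet d} ≃ {v // v ∈ velocitySet d}} :
    IsAdmissibleMirror π ↔
      (∀ p, π (negVelocity (π p)) = negVelocity p) ∧ ∀ p, π p ≠ negVelocity p := by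
  refine and_congr ⟨fun h p => Subtype.ext (h p _ rfl), ?_⟩
    (forall_congr' fun p => not_congr (Subtype.ext_iff (a2 := negVelocity p)).symm)
  rintro h p q hq
  obtain rfl : q = negVelocity (π p) := Subtype.ext hq
  exact congrArg Subtype.val (h p)

theorem card_admissibleMirror :
    Nat.card {π : {v // v ∈ velocitySet d} ≃ {v // v ∈ velocitySet d} // IsAdmissibleMirror π} =
      (2 * d - 1)‼ := by
  rw [Nat.card_congr ((Equiv.subtypeEquivRight fun _ => isAdmissibleMirror_iff).trans
      (FixedPointFreeInvolution.compEquiv negVelocity_involutive)),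
    FixedPointFreeInvolution.card_eq_doubleFactorial (by rw [Fintype.card_coe, card_velocitySet])]

theorem card_admissibleMirror_apply_eq {p p' : {v // v ∈ velocitySet d}}
    (h : (p' : Fin d → ℤ) ≠ -(p : Fin d → ℤ)) :
    Nat.card {π : {v // v ∈ velocitySet d} ≃ {v // v ∈ velocitySet d} //
      IsAdmissibleMirror π ∧ π p = p'} = (2 * d - 3)‼ := by
  have hp : p ≠ negVelocity p' := fun hp => h (by rw [hp]; exact (neg_neg _).symm)
  rw [Nat.card_congr ((Equiv.subtypeEquivRight fun _ => by rw [isAdmissibleMirror_iff]).trans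
      (FixedPointFreeInvolution.compApplyEqEquiv negVelocity_involutive p p')),
    FixedPointFreeInvolution.card_apply_eq (by rw [Fintype.card_coe, card_velocitySet]) hp]

end Mirror

/-- For fixed `p, p' ∈ 𝒫` with `p' ≠ -p`, the number of admissible mirrors with
`π(p) = p'` equals `(2d-3)!!` (with `(-1)!! = 1`), i.e. `(2d-1)!!/(2d-1)`; hence
under the uniform measure on admissible mirrors, the probability of the event
`{π(p) = p'}` is `1/(2d-1)` when `p' ≠ -p`, and `0` when `p' = -p`. -/
theorem admissible_mirrors_single_value (d : ℕ) (hd : 1 ≤ d)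
    (p p' : {v // v ∈ velocitySet d}) :
    ((p' : Fin d → ℤ) ≠ -(p : Fin d → ℤ) →
      Nat.card {π : {v // v ∈ velocitySet d} ≃ {v // v ∈ velocitySet d} //
          IsAdmissibleMirror π ∧ π p = p'} = Nat.doubleFactorial (2 * d - 3) ∧
      Nat.card {π : {v // v ∈ velocitySet d} ≃ {v // v ∈ velocitySet d} //
          IsAdmissibleMirror π ∧ π p = p'} =
        Nat.doubleFactorial (2 * d - 1) / (2 * d - 1) ∧
      (Nat.card {π : {v // v ∈ velocitySet d} ≃ {v // v ∈ velocitySet d} //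
          IsAdmissibleMirror π ∧ π p = p'} : ℚ) /
        (Nat.card {π : {v // v ∈ velocitySet d} ≃ {v // v ∈ velocitySet d} //
          IsAdmissibleMirror π} : ℚ) = 1 / (2 * (d : ℚ) - 1)) ∧
    ((p' : Fin d → ℤ) = -(p : Fin d → ℤ) →
      (Nat.card {π : {v // v ∈ velocitySet d} ≃ {v // v ∈ velocitySet d} //
          IsAdmissibleMirror π ∧ π p = p'} : ℚ) /
        (Nat.card {π : {v // v ∈ velocitySet d} ≃ {v // v ∈ velocitySet d} //
          IsAdmissibleMirror π} : ℚ) = 0) := by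
  have hfactor : (2 * d - 1)‼ = (2 * d - 1) * (2 * d - 3)‼ := by
    rw [show 2 * d - 1 = 2 * d - 2 + 1 by omega, doubleFactorial_add_one,
      Nat.sub_sub]
  refine ⟨fun hne => ?_, fun heq => ?_⟩
  · have hpinned := card_admissibleMirror_apply_eq hne
    refine ⟨hpinned, ?_, ?_⟩
    · rw [hpinned, hfactor, Nat.mul_div_cancel_left _ (by omega)]
    · have hcast : ((2 * d - 1 : ℕ) : ℚ) = 2 * d - 1 := by
        rw [Nat.cast_sub (by omega)]; push_cast; ring
      rw [hpinned, card_admissibleMirror, hfactor, Nat.cast_mul, hcast, div_mul_cancel_right₀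
        (by positivity), one_div]
  · have : IsEmpty {π : {v // v ∈ velocitySet d} ≃ {v // v ∈ velocitySet d} //
        IsAdmissibleMirror π ∧ π p = p'} := ⟨fun π => π.2.1.2 p (by rw [π.2.2, heq])⟩
    rw [Nat.card_of_isEmpty, Nat.cast_zero, zero_div]
end

section
/- Define $R(q,p) = (q - p, -p)$; then $R$ maps $O_N$ bijectively onto $I_N$ and $I_N$ bijectively onto $O_N$. For every mirror configuration $\pi$ and every $x \in I_N$, the exit map satisfies $F_N(x;\pi) \in O_N$ and $F_N(R(F_N(x;\pi));\pi) = R(x)$. Consequently $F_N(\cdot;\pi)$ is a bijection from $I_N$ onto $O_N$; in particular, distinct entering states $x_1 \neq x_2$ in $I_N$ always exit at distinct points: $F_N(x_1;\pi) \neq F_N(x_2;\pi)$. -/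
/-- Position space `X = ℤ × (ℤ/Mℤ)^{d-1}`: an unbounded slab coordinate and
`d-1` periodic transverse coordinates. -/
abbrev MirrorPos (d M : ℕ) := ℤ × (Fin (d - 1) → ZMod M)

/-- Velocity set `𝒫 = {±e₁, …, ±e_d}`: `(none, s)` is `±e₁` (the slab
direction) and `(some j, s)` is `±e_{j+2}` (a transverse direction), with the
sign recorded by the boolean `s`. -/
abbrev MirrorVel (d : ℕ) := Option (Fin (d - 1)) × Bool

/-- Negation of a velocity. -/
def velNeg {d : ℕ} (v : MirrorVel d) : MirrorVel d := (v.1, !v.2)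

/-- The sign `±1` attached to a boolean. -/
def bsign (b : Bool) : ℤ := if b then 1 else -1

/-- Translation of a position by a velocity: `±e₁` shifts the slab coordinate,
a transverse velocity shifts the corresponding periodic coordinate. -/
def velMove {d M : ℕ} (q : MirrorPos d M) (v : MirrorVel d) : MirrorPos d M :=
  match v.1 with
  | none => (q.1 + bsign v.2, q.2)
  | some j => (q.1, Function.update q.2 j (q.2 j + (bsign v.2 : ZMod M)))

/-- The slab `Λ_N = {1,…,N} × (ℤ/Mℤ)^{d-1}`. -/
def slab (d M N : ℕ) : Set (MirrorPos d M) := {q | 1 ≤ q.1 ∧ q.1 ≤ (N : ℤ)}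

/-- The phase space `ℳ_N = Λ_N × 𝒫`. -/
def phaseSpace (d M N : ℕ) : Set (MirrorPos d M × MirrorVel d) :=
  {x | x.1 ∈ slab d M N}

/-- The velocity `e₁`. -/
def velPlus (d : ℕ) : MirrorVel d := (none, true)

/-- The velocity `-e₁`. -/
def velMinus (d : ℕ) : MirrorVel d := (none, false)

/-- Incoming boundary `I⁺_N = {(q, e₁) : q₁ = 1}`. -/
def inPlus (d M N : ℕ) : Set (MirrorPos d M × MirrorVel d) :=
  {x | x.1.1 = 1 ∧ x.2 = velPlus d}

/-- Incoming boundary `I⁻_N = {(q, -e₁) : q₁ = N}`. -/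
def inMinus (d M N : ℕ) : Set (MirrorPos d M × MirrorVel d) :=
  {x | x.1.1 = (N : ℤ) ∧ x.2 = velMinus d}

/-- Outgoing boundary `O⁺_N = {(q + e₁, e₁) : q₁ = N}`. -/
def outPlus (d M N : ℕ) : Set (MirrorPos d M × MirrorVel d) :=
  {x | x.1.1 = (N : ℤ) + 1 ∧ x.2 = velPlus d}

/-- Outgoing boundary `O⁻_N = {(q - e₁, -e₁) : q₁ = 1}`. -/
def outMinus (d M N : ℕ) : Set (MirrorPos d M × MirrorVel d) :=
  {x | x.1.1 = 0 ∧ x.2 = velMinus d}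

/-- A mirror configuration: at each site of the slab, a bijection of the
velocity set satisfying the reversibility condition `π(q; -π(q;p)) = -p` and
the no-U-turn condition `π(q;p) ≠ -p`. -/
def IsMirrorConfig (d M N : ℕ) (π : MirrorPos d M → (MirrorVel d ≃ MirrorVel d)) : Prop :=
  ∀ q ∈ slab d M N,
    (∀ p, π q (velNeg (π q p)) = velNeg p) ∧ ∀ p, π q p ≠ velNeg p

/-- The mirrors dynamics `F(q,p;π) = (q + π(q;p), π(q;p))`. -/
def mirrorF {d M : ℕ} (π : MirrorPos d M → (MirrorVel d ≃ MirrorVel d))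
    (x : MirrorPos d M × MirrorVel d) : MirrorPos d M × MirrorVel d :=
  (velMove x.1 (π x.1 x.2), π x.1 x.2)

/-- The exit time `n_x = inf {n ≥ 1 : Fⁿ(x;π) ∈ O_N}`. -/
noncomputable def exitTime {d M : ℕ} (N : ℕ)
    (π : MirrorPos d M → (MirrorVel d ≃ MirrorVel d))
    (x : MirrorPos d M × MirrorVel d) : ℕ :=
  sInf {n | 1 ≤ n ∧ (mirrorF π)^[n] x ∈ outPlus d M N ∪ outMinus d M N}

/-- The exit map `F_N(x;π) = F^{n_x}(x;π)`. -/
noncomputable def mirrorFN {d M : ℕ} (N : ℕ)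
    (π : MirrorPos d M → (MirrorVel d ≃ MirrorVel d))
    (x : MirrorPos d M × MirrorVel d) : MirrorPos d M × MirrorVel d :=
  (mirrorF π)^[exitTime N π x] x

/-- The time-reversal map `R(q,p) = (q - p, -p)`. -/
def timeReversal {d M : ℕ} (x : MirrorPos d M × MirrorVel d) :
    MirrorPos d M × MirrorVel d :=
  (velMove x.1 (velNeg x.2), velNeg x.2)

/-!
The dynamics is reversible: `F (R (F y)) = R y` for every `y` in the slab, so `R` carries the
forward orbit of an entering state `x`, read backwards, onto an orbit that enters at
`R (F_N x)` and leaves at `R x`. It cannot leave earlier, since an earlier exit of the reversed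
orbit would be a re-entry of the forward orbit into `I_N`, and `I_N` is not reachable from
inside the slab. Every orbit does leave: `F` is injective and the phase space is finite, so an
orbit trapped in the slab would be periodic, giving its starting point a preimage in the slab.
-/

section Reversible

variable {α : Type*} {F R : α → α} {P I O : Set α}

noncomputable def hitTime (F : α → α) (O : Set α) (x : α) : ℕ :=
  sInf {n | 1 ≤ n ∧ F^[n] x ∈ O}

theorem exists_iterate_mem_of_finite (hF : F.Injective) (hP : P.Finite)
    (hstep : ∀ y ∈ P, F y ∈ P ∪ O) {x : α} (hx : x ∈ P) (hx' : ∀ y ∈ P, F y ≠ x) :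
    ∃ n, 1 ≤ n ∧ F^[n] x ∈ O := by
  by_contra! hO
  have hmem : ∀ n, F^[n] x ∈ P := by
    intro n
    induction n with
    | zero => exact hx
    | succ k ih =>
      rw [Function.iterate_succ_apply']
      refine (hstep _ ih).resolve_right fun h => hO (k + 1) le_add_self ?_
      rwa [Function.iterate_succ_apply']
  obtain ⟨a, b, hab, heq⟩ := hP.exists_lt_map_eq_of_forall_mem hmem
  obtain ⟨k, rfl⟩ := Nat.exists_eq_add_of_lt hab
  rw [add_assoc, Function.iterate_add_apply] at heq
  have hper := hF.iterate a heq.symm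
  rw [Function.iterate_succ_apply'] at hper
  exact hx' _ (hmem k) hper

theorem iterate_hitTime_mem {x : α} (h : ∃ n, 1 ≤ n ∧ F^[n] x ∈ O) :
    1 ≤ hitTime F O x ∧ F^[hitTime F O x] x ∈ O :=
  Nat.sInf_mem h

theorem iterate_mem_of_lt_hitTime (hstep : ∀ y ∈ P, F y ∈ P ∪ O) {x : α} (hx : x ∈ P)
    {i : ℕ} (hi : i < hitTime F O x) : F^[i] x ∈ P := by
  induction i with
  | zero => exact hx
  | succ k ih =>
    rw [Function.iterate_succ_apply']
    refine (hstep _ (ih (by omega))).resolve_right fun h => ?_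
    have : hitTime F O x ≤ k + 1 :=
      Nat.sInf_le ⟨le_add_self, by rwa [Function.iterate_succ_apply']⟩
    omega

theorem iterate_reversal_iterate (hrev : ∀ y ∈ P, F (R (F y)) = R y) {x : α} {n : ℕ}
    (hP : ∀ i < n, F^[i] x ∈ P) {k : ℕ} (hk : k ≤ n) :
    F^[k] (R (F^[n] x)) = R (F^[n - k] x) := by
  induction k with
  | zero => rfl
  | succ k ih =>
    obtain ⟨j, hj⟩ : ∃ j, n - k = j + 1 := ⟨n - k - 1, by omega⟩
    rw [Function.iterate_succ_apply', ih (by omega), hj, Function.iterate_succ_apply',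
      hrev _ (hP j (by omega)), show n - (k + 1) = j by omega]

theorem iterate_hitTime_reversal (hR : R.Involutive) (hRO : Set.MapsTo R O I)
    (hstep : ∀ y ∈ P, F y ∈ P ∪ O) (hrev : ∀ y ∈ P, F (R (F y)) = R y)
    (hI : ∀ y ∈ P, F y ∉ I) {x : α} (hxP : x ∈ P) (hxO : R x ∈ O)
    (hexit : ∃ n, 1 ≤ n ∧ F^[n] x ∈ O) :
    F^[hitTime F O (R (F^[hitTime F O x] x))] (R (F^[hitTime F O x] x)) = R x := by
  set n := hitTime F O x
  have hn := iterate_hitTime_mem hexit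
  have horbit : ∀ i < n, F^[i] x ∈ P := fun i hi => iterate_mem_of_lt_hitTime hstep hxP hi
  have hback : ∀ k ≤ n, F^[k] (R (F^[n] x)) = R (F^[n - k] x) := fun k hk =>
    iterate_reversal_iterate hrev horbit hk
  have hexit' : 1 ≤ n ∧ F^[n] (R (F^[n] x)) ∈ O := ⟨hn.1, by rwa [hback n le_rfl, n.sub_self]⟩
  have hm := iterate_hitTime_mem ⟨n, hexit'⟩
  suffices hitTime F O (R (F^[n] x)) = n by rw [this, hback n le_rfl, n.sub_self]; rfl
  refine le_antisymm (Nat.sInf_le hexit') (not_lt.1 fun hlt => ?_)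
  obtain ⟨j, hj⟩ : ∃ j, n - hitTime F O (R (F^[n] x)) = j + 1 :=
    ⟨_, (Nat.succ_pred_eq_of_pos (by omega)).symm⟩
  have hIn : F^[j + 1] x ∈ I := by
    have := hRO (hback _ hlt.le ▸ hm.2)
    rwa [hR, hj] at this
  rw [Function.iterate_succ_apply'] at hIn
  exact hI _ (horbit j (by omega)) hIn

theorem bijOn_of_reversal {Φ : α → α} (hR : R.Involutive)
    (hRO : Set.MapsTo R O I) (hΦ : Set.MapsTo Φ I O) (hrev : ∀ x ∈ I, Φ (R (Φ x)) = R x) :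
    Set.BijOn Φ I O := by
  refine Set.InvOn.bijOn (f' := R ∘ Φ ∘ R) ⟨fun x hx => ?_, fun z hz => ?_⟩ hΦ
    (hRO.comp (hΦ.comp hRO))
  · simp only [Function.comp, hrev x hx, hR x]
  · simpa only [Function.comp, hR (Φ (R z)), hR z] using hrev _ (hRO hz)

theorem Function.Involutive.bijOn (hR : R.Involutive) (hRI : Set.MapsTo R I O)
    (hRO : Set.MapsTo R O I) : Set.BijOn R I O :=
  Set.InvOn.bijOn ⟨fun x _ => hR x, fun x _ => hR x⟩ hRI hRO

end Reversible

section Mirrors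

variable {d M N : ℕ}

@[simp] theorem velNeg_velNeg (v : MirrorVel d) : velNeg (velNeg v) = v := by
  simp [velNeg]

@[simp] theorem bsign_true : bsign true = 1 := rfl

@[simp] theorem bsign_false : bsign false = -1 := rfl

theorem bsign_add_bsign_not (s : Bool) : bsign s + bsign (!s) = 0 := by
  cases s <;> rfl

@[simp] theorem velMove_velMove_velNeg (q : MirrorPos d M) (v : MirrorVel d) :
    velMove (velMove q v) (velNeg v) = q := by
  obtain ⟨_ | j, s⟩ := v
  · simp [velMove, velNeg, add_assoc, bsign_add_bsign_not]
  · simp [velMove, velNeg, add_assoc, ← Int.cast_add, bsign_add_bsign_not]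

theorem timeReversal_involutive :
    (timeReversal : MirrorPos d M × MirrorVel d → _).Involutive :=
  fun _ => Prod.ext (velMove_velMove_velNeg _ _) (velNeg_velNeg _)

theorem mirrorF_injective (π : MirrorPos d M → (MirrorVel d ≃ MirrorVel d)) :
    (mirrorF π).Injective := by
  intro a b h
  simp only [mirrorF, Prod.mk.injEq] at h
  obtain ⟨hq, hv⟩ := h
  have ha : a.1 = b.1 := by
    simpa [hv] using congrArg (velMove · (velNeg (π b.1 b.2))) hq
  exact Prod.ext ha ((π b.1).injective (ha ▸ hv))

theorem mem_phaseSpace {x : MirrorPos d M × MirrorVel d} :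
    x ∈ phaseSpace d M N ↔ 1 ≤ x.1.1 ∧ x.1.1 ≤ N := Iff.rfl

theorem phaseSpace_finite (hM : 1 ≤ M) : (phaseSpace d M N).Finite := by
  have : NeZero M := ⟨by omega⟩
  exact ((Set.finite_Icc (1 : ℤ) N).prod Set.finite_univ).prod Set.finite_univ |>.subset
    fun x hx => ⟨⟨hx, trivial⟩, trivial⟩

theorem mirrorF_mem_phaseSpace_or_out (π : MirrorPos d M → (MirrorVel d ≃ MirrorVel d))
    {y : MirrorPos d M × MirrorVel d} (hy : y ∈ phaseSpace d M N) :
    mirrorF π y ∈ phaseSpace d M N ∪ (outPlus d M N ∪ outMinus d M N) := by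
  rw [mem_phaseSpace] at hy
  rcases hv : π y.1 y.2 with ⟨_ | j, _ | _⟩ <;>
    simp [mirrorF, hv, velMove, phaseSpace, slab, outPlus, outMinus, velPlus, velMinus] <;>
    omega

theorem mapsTo_timeReversal_in_out :
    Set.MapsTo (timeReversal (d := d) (M := M)) (inPlus d M N ∪ inMinus d M N)
      (outPlus d M N ∪ outMinus d M N) := by
  rintro ⟨⟨q, _⟩, v⟩ (⟨hq, rfl⟩ | ⟨hq, rfl⟩) <;>
    simp_all [timeReversal, velMove, velNeg, outPlus, outMinus, velPlus, velMinus]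

theorem mapsTo_timeReversal_out_in :
    Set.MapsTo (timeReversal (d := d) (M := M)) (outPlus d M N ∪ outMinus d M N)
      (inPlus d M N ∪ inMinus d M N) := by
  rintro ⟨⟨q, _⟩, v⟩ (⟨hq, rfl⟩ | ⟨hq, rfl⟩) <;>
    simp_all [timeReversal, velMove, velNeg, inPlus, inMinus, velPlus, velMinus]

theorem in_subset_phaseSpace (hN : 1 ≤ N) :
    inPlus d M N ∪ inMinus d M N ⊆ phaseSpace d M N := by
  rintro x (⟨hx, -⟩ | ⟨hx, -⟩) <;> rw [mem_phaseSpace, hx] <;> omega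

theorem out_disjoint_phaseSpace {x : MirrorPos d M × MirrorVel d}
    (hx : x ∈ outPlus d M N ∪ outMinus d M N) : x ∉ phaseSpace d M N := by
  rcases hx with ⟨hx, -⟩ | ⟨hx, -⟩ <;> rw [mem_phaseSpace, hx] <;> omega

theorem mirrorF_timeReversal_mirrorF {π : MirrorPos d M → (MirrorVel d ≃ MirrorVel d)}
    (hπ : IsMirrorConfig d M N π) {y : MirrorPos d M × MirrorVel d}
    (hy : y ∈ phaseSpace d M N) :
    mirrorF π (timeReversal (mirrorF π y)) = timeReversal y := by
  simp only [mirrorF, timeReversal, velMove_velMove_velNeg, (hπ y.1 hy).1 y.2]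

theorem mirrorF_not_mem_in (π : MirrorPos d M → (MirrorVel d ≃ MirrorVel d))
    {y : MirrorPos d M × MirrorVel d} (hy : y ∈ phaseSpace d M N) :
    mirrorF π y ∉ inPlus d M N ∪ inMinus d M N := fun hin => by
  have hout := mapsTo_timeReversal_in_out hin
  -- the position of `R (F y)` is that of `y`
  simp only [timeReversal, mirrorF, velMove_velMove_velNeg] at hout
  exact out_disjoint_phaseSpace hout hy

end Mirrors

theorem mirrors_exit_map_bijective_general (d M N : ℕ) (hM : 1 ≤ M) (hN : 1 ≤ N)
    (π : MirrorPos d M → (MirrorVel d ≃ MirrorVel d))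
    (hπ : IsMirrorConfig d M N π) :
    Set.BijOn timeReversal (outPlus d M N ∪ outMinus d M N)
      (inPlus d M N ∪ inMinus d M N) ∧
    Set.BijOn timeReversal (inPlus d M N ∪ inMinus d M N)
      (outPlus d M N ∪ outMinus d M N) ∧
    (∀ x ∈ inPlus d M N ∪ inMinus d M N,
      mirrorFN N π x ∈ outPlus d M N ∪ outMinus d M N ∧
      mirrorFN N π (timeReversal (mirrorFN N π x)) = timeReversal x) ∧
    Set.BijOn (mirrorFN N π) (inPlus d M N ∪ inMinus d M N)
      (outPlus d M N ∪ outMinus d M N) ∧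
    ∀ x₁ ∈ inPlus d M N ∪ inMinus d M N, ∀ x₂ ∈ inPlus d M N ∪ inMinus d M N,
      x₁ ≠ x₂ → mirrorFN N π x₁ ≠ mirrorFN N π x₂ := by
  have hstep (y) := mirrorF_mem_phaseSpace_or_out (N := N) π (y := y)
  have hexit (x) (hx : x ∈ inPlus d M N ∪ inMinus d M N) :
      mirrorFN N π x ∈ outPlus d M N ∪ outMinus d M N ∧
      mirrorFN N π (timeReversal (mirrorFN N π x)) = timeReversal x := by
    have hxP := in_subset_phaseSpace hN hx
    have hout := exists_iterate_mem_of_finite (mirrorF_injective π) (phaseSpace_finite hM)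
      hstep hxP fun y hy h => mirrorF_not_mem_in π hy (h ▸ hx)
    exact ⟨(iterate_hitTime_mem hout).2,
      iterate_hitTime_reversal timeReversal_involutive mapsTo_timeReversal_out_in hstep
        (fun _ => mirrorF_timeReversal_mirrorF hπ) (fun _ => mirrorF_not_mem_in π) hxP
        (mapsTo_timeReversal_in_out hx) hout⟩
  have hbij := bijOn_of_reversal timeReversal_involutive mapsTo_timeReversal_out_in
    (fun x hx => (hexit x hx).1) fun x hx => (hexit x hx).2
  exact ⟨timeReversal_involutive.bijOn mapsTo_timeReversal_out_in mapsTo_timeReversal_in_out,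
    timeReversal_involutive.bijOn mapsTo_timeReversal_in_out mapsTo_timeReversal_out_in,
    hexit, hbij, fun _ h₁ _ h₂ => hbij.injOn.ne h₁ h₂⟩

/-- The time-reversal map `R` exchanges `O_N` and `I_N` bijectively; for every
mirror configuration `π` and every `x ∈ I_N` the exit map satisfies
`F_N(x;π) ∈ O_N` and `F_N(R(F_N(x;π));π) = R(x)`. Consequently `F_N(·;π)` is a
bijection from `I_N` onto `O_N`; in particular distinct entering states exit at
distinct points. -/
theorem mirrors_exit_map_bijective (d M N : ℕ) (hd : 2 ≤ d) (hM : 1 ≤ M) (hN : 1 ≤ N)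
    (π : MirrorPos d M → (MirrorVel d ≃ MirrorVel d))
    (hπ : IsMirrorConfig d M N π) :
    Set.BijOn timeReversal (outPlus d M N ∪ outMinus d M N)
      (inPlus d M N ∪ inMinus d M N) ∧
    Set.BijOn timeReversal (inPlus d M N ∪ inMinus d M N)
      (outPlus d M N ∪ outMinus d M N) ∧
    (∀ x ∈ inPlus d M N ∪ inMinus d M N,
      mirrorFN N π x ∈ outPlus d M N ∪ outMinus d M N ∧
      mirrorFN N π (timeReversal (mirrorFN N π x)) = timeReversal x) ∧
    Set.BijOn (mirrorFN N π) (inPlus d M N ∪ inMinus d M N)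
      (outPlus d M N ∪ outMinus d M N) ∧
    ∀ x₁ ∈ inPlus d M N ∪ inMinus d M N, ∀ x₂ ∈ inPlus d M N ∪ inMinus d M N,
      x₁ ≠ x₂ → mirrorFN N π x₁ ≠ mirrorFN N π x₂ :=
  mirrors_exit_map_bijective_general d M N hM hN π hπ
end
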